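/- For every finite set T ⊆ ℝ², the inclusion conv(S) ⊆ ⋂_{λ ∈ T} conv(S_λ) is strict; that is, there exists a point in ⋂_{λ ∈ T} conv(S_λ) that does not belong to conv(S). -/

import Mathlib

open Set

/-- The box `[0,1]³`. -/
def unitCube : Set (ℝ × ℝ × ℝ) :=
  {p | p.1 ∈ Icc (0:ℝ) 1 ∧ p.2.1 ∈ Icc (0:ℝ) 1 ∧ p.2.2 ∈ Icc (0:ℝ) 1}

/-- `S = {(x,y₁,y₂) ∈ [0,1]³ : x·y₁ = 1/2, x·y₂ = 1/2}`. -/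
def setS : Set (ℝ × ℝ × ℝ) :=
  {p ∈ unitCube | p.1 * p.2.1 = 1/2 ∧ p.1 * p.2.2 = 1/2}

/-- The aggregated set `S_λ` with weights `l = (λ₁, λ₂)`. -/
def setAgg (l : ℝ × ℝ) : Set (ℝ × ℝ × ℝ) :=
  {p ∈ unitCube | l.1 * (p.1 * p.2.1 - 1/2) + l.2 * (p.1 * p.2.2 - 1/2) = 0}

/-!
Every point of `S` has `x ≠ 0`, hence `y₁ = y₂`: `conv(S)` lies in the plane `y₁ = y₂`, which
misses `p_δ = (3/4, 2/3 + δ, 2/3 + δ + δ²)` for `δ ≠ 0`.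

Fix `λ` and let `g_λ` be the aggregated constraint, so `S_λ = {g_λ = 0} ∩ [0,1]³`. If `q ∈ S_λ`
and `p_δ ∈ [q, r]` with `g_λ(p_δ) · g_λ(r) ≤ 0`, the intermediate value theorem gives a zero `z`
of `g_λ` on `[p_δ, r]`, and `p_δ ∈ [q, z] ⊆ conv(S_λ)`. For `λ₁ + λ₂ ≠ 0` take `q = (1/2, 1, 1)`
and `r = 2 p_δ - q`; then `g_λ(p_δ) = (3/4) δ (λ₁ + λ₂ + λ₂ δ)`, and because `y₂ - y₁` is of the
smaller order `δ²`, this has the sign of `λ₁ + λ₂` for small `δ > 0`, while `g_λ(r)` has the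
opposite sign. For `λ₁ + λ₂ = 0`, `g_λ = λ₁ x (y₁ - y₂)` vanishes at `q = (0, 0, 1)`, and `r` is
taken beyond the plane `y₁ = y₂`. Finitely many `λ` allow a common `δ`.
-/

open Filter Topology

theorem Wbtw.mem_convexHull_of_mul_nonpos {E : Type*} [AddCommGroup E] [Module ℝ E]
    [TopologicalSpace E] [ContinuousAdd E] [ContinuousSMul ℝ E] {K : Set E} {f : E → ℝ}
    {q p r : E} (h : Wbtw ℝ q p r) (hK : Convex ℝ K) (hqK : q ∈ K) (hrK : r ∈ K)
    (hf : ContinuousOn f (segment ℝ p r)) (hfq : f q = 0) (hfpr : f p * f r ≤ 0) :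
    p ∈ convexHull ℝ {x ∈ K | f x = 0} := by
  have hseg := (convex_segment p r).isPreconnected
  obtain ⟨z, hz, hfz⟩ : ∃ z ∈ segment ℝ p r, f z = 0 := by
    rcases mul_nonpos_iff.1 hfpr with ⟨hfp, hfr⟩ | ⟨hfp, hfr⟩
    · exact hseg.intermediate_value (right_mem_segment ℝ p r) (left_mem_segment ℝ p r) hf
        (mem_Icc.2 ⟨hfr, hfp⟩)
    · exact hseg.intermediate_value (left_mem_segment ℝ p r) (right_mem_segment ℝ p r) hf
        (mem_Icc.2 ⟨hfp, hfr⟩)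
  have hzK : z ∈ K := hK.segment_subset (hK.segment_subset hqK hrK h.mem_segment) hrK hz
  exact segment_subset_convexHull (s := {x ∈ K | f x = 0}) ⟨hqK, hfq⟩ ⟨hzK, hfz⟩
    (h.trans_right_left (mem_segment_iff_wbtw.1 hz)).mem_segment

theorem convex_unitCube : Convex ℝ unitCube :=
  (convex_Icc 0 1).prod ((convex_Icc 0 1).prod (convex_Icc 0 1))

theorem setS_subset_setAgg (l : ℝ × ℝ) : setS ⊆ setAgg l := by
  rintro p ⟨hp, h₁, h₂⟩
  refine ⟨hp, ?_⟩
  rw [h₁, h₂]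
  ring

theorem convexHull_setS_subset : convexHull ℝ setS ⊆ {q | q.2.1 = q.2.2} := by
  refine convexHull_min ?_ ?_
  · rintro q ⟨-, h₁, h₂⟩
    have hq : q.1 ≠ 0 := by rintro h; simp [h] at h₁
    exact mul_left_cancel₀ hq (h₁.trans h₂.symm)
  · intro x hx y hy a b _ _ _
    simp only [mem_ofPred_eq, Prod.snd_add, Prod.smul_snd, Prod.fst_add, Prod.smul_fst] at hx hy ⊢
    rw [hx, hy]

noncomputable def aggregate (l : ℝ × ℝ) (p : ℝ × ℝ × ℝ) : ℝ :=
  l.1 * (p.1 * p.2.1 - 1/2) + l.2 * (p.1 * p.2.2 - 1/2)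

theorem continuous_aggregate (l : ℝ × ℝ) : Continuous (aggregate l) := by
  unfold aggregate
  fun_prop

noncomputable def tiltedPoint (δ : ℝ) : ℝ × ℝ × ℝ := (3/4, 2/3 + δ, 2/3 + δ + δ^2)

theorem setAgg_eq (l : ℝ × ℝ) : setAgg l = {p ∈ unitCube | aggregate l p = 0} := rfl

theorem tiltedPoint_notMem_convexHull_setS {δ : ℝ} (hδ : δ ≠ 0) :
    tiltedPoint δ ∉ convexHull ℝ setS := fun h ↦
  hδ <| pow_eq_zero_iff two_ne_zero |>.1 <| by
    simpa [tiltedPoint] using (convexHull_setS_subset h).symm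

theorem aggregate_tiltedPoint (l : ℝ × ℝ) (δ : ℝ) :
    aggregate l (tiltedPoint δ) = 3/4 * δ * (l.1 + l.2 + l.2 * δ) := by
  simp only [aggregate, tiltedPoint]
  ring

theorem tiltedPoint_mem_convexHull_setAgg_of_add_eq_zero {l : ℝ × ℝ} (hl : l.1 + l.2 = 0)
    {δ : ℝ} (hδ₀ : 0 ≤ δ) (hδ : δ ≤ 1/12) :
    tiltedPoint δ ∈ convexHull ℝ (setAgg l) := by
  rw [setAgg_eq]
  have hb : l.2 = -l.1 := by linarith
  let r : ℝ × ℝ × ℝ := (1, 8/9 + 4*δ/3, 5/9 + 4*δ/3 + 4*δ^2/3)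
  have hr : aggregate l r = l.1 * (1/3 - 4/3 * δ^2) := by
    simp only [aggregate, r, hb]
    ring
  refine Wbtw.mem_convexHull_of_mul_nonpos (q := (0, 0, 1)) (r := r) ?_ convex_unitCube
    ?_ ?_ (continuous_aggregate l).continuousOn ?_ ?_
  · refine mem_segment_iff_wbtw.1 ⟨1/4, 3/4, by norm_num, by norm_num, by norm_num, ?_⟩
    simp only [tiltedPoint, r, Prod.smul_mk, Prod.mk_add_mk, smul_eq_mul, Prod.mk.injEq]
    refine ⟨?_, ?_, ?_⟩ <;> ring
  · norm_num [unitCube]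
  · refine ⟨⟨?_, ?_⟩, ⟨?_, ?_⟩, ⟨?_, ?_⟩⟩ <;> dsimp only [r] <;> nlinarith
  · norm_num [aggregate, hb]
  · rw [aggregate_tiltedPoint, hr, hl, hb]
    have h : 0 ≤ 1/4 - δ^2 := by nlinarith
    linear_combination mul_nonneg (mul_nonneg (sq_nonneg l.1) (sq_nonneg δ)) h

theorem tiltedPoint_mem_convexHull_setAgg {l : ℝ × ℝ} {δ : ℝ} (hδ₀ : 0 < δ) (hδ : δ ≤ 1/54)
    (hl : (l.2 * δ)^2 ≤ (l.1 + l.2)^2 / 4) :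
    tiltedPoint δ ∈ convexHull ℝ (setAgg l) := by
  rw [setAgg_eq]
  set s := l.1 + l.2
  set w := s + l.2 * δ
  let r : ℝ × ℝ × ℝ := (1, 1/3 + 2*δ, 1/3 + 2*δ + 2*δ^2)
  have hr : aggregate l r = 2 * (δ * w - s / 12) := by
    simp only [aggregate, r, w, s]
    ring
  refine Wbtw.mem_convexHull_of_mul_nonpos (q := (1/2, 1, 1)) (r := r) ?_ convex_unitCube
    ?_ ?_ (continuous_aggregate l).continuousOn ?_ ?_
  · refine mem_segment_iff_wbtw.1 ⟨1/2, 1/2, by norm_num, by norm_num, by norm_num, ?_⟩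
    simp only [tiltedPoint, r, Prod.smul_mk, Prod.mk_add_mk, smul_eq_mul, Prod.mk.injEq]
    refine ⟨?_, ?_, ?_⟩ <;> ring
  · norm_num [unitCube]
  · refine ⟨⟨?_, ?_⟩, ⟨?_, ?_⟩, ⟨?_, ?_⟩⟩ <;> dsimp only [r] <;> nlinarith
  · norm_num [aggregate]
  · rw [aggregate_tiltedPoint, hr]
    have hws : s^2 / 2 ≤ w * s := by nlinarith [sq_nonneg (s + 2 * l.2 * δ)]
    have hww : w^2 ≤ 5 * s^2 / 2 := by nlinarith [sq_nonneg (s - 2 * l.2 * δ)]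
    have hδw : δ * w^2 ≤ w * s / 12 := by nlinarith
    nlinarith

theorem eventually_tiltedPoint_mem_convexHull_setAgg (l : ℝ × ℝ) :
    ∀ᶠ δ in 𝓝[>] 0, tiltedPoint δ ∈ convexHull ℝ (setAgg l) := by
  by_cases hs : l.1 + l.2 = 0
  · filter_upwards [Ioc_mem_nhdsGT (by norm_num : (0:ℝ) < 1/12)] with δ hδ
    exact tiltedPoint_mem_convexHull_setAgg_of_add_eq_zero hs hδ.1.le hδ.2
  · have hsmall : ∀ᶠ δ in 𝓝 (0:ℝ), (l.2 * δ)^2 ≤ (l.1 + l.2)^2 / 4 :=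
      Tendsto.eventually_le_const (by positivity)
        ((by fun_prop : Continuous fun δ : ℝ ↦ (l.2 * δ)^2).tendsto' 0 0 (by simp))
    filter_upwards [Ioc_mem_nhdsGT (by norm_num : (0:ℝ) < 1/54),
      nhdsWithin_le_nhds hsmall] with δ hδ hδl
    exact tiltedPoint_mem_convexHull_setAgg hδ.1 hδ.2 hδl

theorem stmt2 (T : Set (ℝ × ℝ)) (hT : T.Finite) :
    convexHull ℝ setS ⊂ ⋂ l ∈ T, convexHull ℝ (setAgg l) := by
  have hsub : convexHull ℝ setS ⊆ ⋂ l ∈ T, convexHull ℝ (setAgg l) :=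
    subset_iInter₂ fun l _ ↦ convexHull_mono (setS_subset_setAgg l)
  have hT' : ∀ᶠ δ in 𝓝[>] 0, ∀ l ∈ T, tiltedPoint δ ∈ convexHull ℝ (setAgg l) :=
    hT.eventually_all.2 fun l _ ↦ eventually_tiltedPoint_mem_convexHull_setAgg l
  obtain ⟨δ, hδ, hδ₀⟩ := (hT'.and self_mem_nhdsWithin).exists
  exact (ssubset_iff_of_subset hsub).2
    ⟨tiltedPoint δ, mem_iInter₂.2 hδ, tiltedPoint_notMem_convexHull_setS hδ₀.ne'⟩
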